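/- arXiv:1807.05200 — 3 statements merged into one kernel-verified Lean document; each statement's English description precedes it below -/
import Mathlib

section
/- Let p ≥ 1 be an integer and let v₁, …, v_{2p+1} be unit vectors in ℝ², where v_h = (cos θ_h, sin θ_h) with θ₁ ≤ θ₂ ≤ … ≤ θ_{2p+1} and all θ_h satisfying |θ_h| ≤ φ for some φ < π/2. Then the norm of the sum ∑_{h=1}^{2p+1} v_h is strictly greater than 1. -/
/-!
Project the sum onto the median vector `v m`, `m = p`. Its inner product with `v h` is
`cos (θ h - θ m)`, and pairing `h` with its mirror index `2p - h` puts the two angles on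
opposite sides of `θ m`, so each pair of cosines has positive sum: in `cos a + cos b =
2 cos ((a + b) / 2) cos ((a - b) / 2)` both half-angles lie in `[-φ, φ]`.
The median itself contributes `1`, so `1 < ⟪∑ v, v m⟫ ≤ ‖∑ v‖`.
-/

open Real
open scoped RealInnerProductSpace

theorem cos_add_cos_pos {a b : ℝ} (hadd : |a + b| < π) (hsub : |a - b| < π) :
    0 < cos a + cos b := by
  have hhalf : ∀ x, |x| < π → 0 < cos (x / 2) := fun x hx ↦ by
    obtain ⟨h₁, h₂⟩ := abs_lt.1 hx
    exact cos_pos_of_mem_Ioo ⟨by linarith, by linarith⟩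
  have := hhalf _ hadd
  have := hhalf _ hsub
  rw [cos_add_cos]
  positivity

theorem cos_sub_add_cos_sub_pos {φ x y z : ℝ} (hφ : φ < π / 2) (hx : |x| ≤ φ) (hy : |y| ≤ φ)
    (hz : |z| ≤ φ) (hxz : x ≤ z) (hzy : z ≤ y) : 0 < cos (x - z) + cos (y - z) := by
  rw [abs_le] at hx hy hz
  apply cos_add_cos_pos <;> rw [abs_lt] <;> constructor <;> linarith

theorem Fin.lt_sum_of_add_rev_pos {n : ℕ} (f : Fin n → ℝ) (m : Fin n) (hm : m.rev = m)
    (hpair : ∀ i ≠ m, 0 < f i + f i.rev) (hne : ∃ i, i ≠ m) : f m < ∑ i, f i := by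
  obtain ⟨j, hj⟩ := hne
  have hdouble : 2 * ∑ i, f i = ∑ i, (f i + f i.rev) := by
    rw [Finset.sum_add_distrib, two_mul, ← Equiv.sum_comp Fin.revPerm f]
    rfl
  have hrest : 0 < ∑ i ∈ Finset.univ.erase m, (f i + f i.rev) :=
    Finset.sum_pos (fun i hi ↦ hpair i (Finset.ne_of_mem_erase hi)) ⟨j, by simpa using hj⟩
  rw [← Finset.add_sum_erase _ (fun i ↦ f i + f i.rev) (Finset.mem_univ m), hm] at hdouble
  linarith

theorem EuclideanSpace.inner_eq_cos_sub {x y : EuclideanSpace ℝ (Fin 2)} {a b : ℝ}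
    (hx : x.ofLp = ![cos a, sin a]) (hy : y.ofLp = ![cos b, sin b]) :
    ⟪x, y⟫ = cos (a - b) := by
  simp [EuclideanSpace.inner_eq_star_dotProduct, hx, hy, dotProduct, Fin.sum_univ_two, cos_sub]
  ring

/-- An odd number `2p+1 ≥ 3` of unit vectors in the plane, with ordered angles all lying
in a wedge of half-opening `φ < π/2`, has a sum of norm strictly greater than `1`. -/
theorem stmt_0 (p : ℕ) (hp : 1 ≤ p) (θ : Fin (2 * p + 1) → ℝ) (φ : ℝ)
    (hφ : φ < π / 2) (hbd : ∀ h, |θ h| ≤ φ) (hmono : Monotone θ)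
    (v : Fin (2 * p + 1) → EuclideanSpace ℝ (Fin 2))
    (hv : ∀ h, v h = ![Real.cos (θ h), Real.sin (θ h)]) :
    1 < ‖∑ h, v h‖ := by
  set m : Fin (2 * p + 1) := ⟨p, by omega⟩
  have hm : m.rev = m := Fin.ext (by simp [m, Fin.val_rev]; omega)
  have hpair : ∀ i ≠ m, 0 < cos (θ i - θ m) + cos (θ i.rev - θ m) := by
    intro i _
    rcases le_total i m with him | hmi
    · exact cos_sub_add_cos_sub_pos hφ (hbd _) (hbd _) (hbd _) (hmono him)
        (hmono (hm ▸ Fin.rev_le_rev.2 him))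
    · rw [add_comm]
      exact cos_sub_add_cos_sub_pos hφ (hbd _) (hbd _) (hbd _)
        (hmono (hm ▸ Fin.rev_le_rev.2 hmi)) (hmono hmi)
  have hsum : 1 < ∑ h, cos (θ h - θ m) := by
    simpa using Fin.lt_sum_of_add_rev_pos (fun h ↦ cos (θ h - θ m)) m hm hpair
      ⟨0, fun h ↦ by simp [m, Fin.ext_iff] at h; omega⟩
  have hinner : ⟪∑ h, v h, v m⟫ = ∑ h, cos (θ h - θ m) := by
    simp only [sum_inner, EuclideanSpace.inner_eq_cos_sub (hv _) (hv m)]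
  have hnorm : ‖v m‖ = 1 := by
    rw [norm_eq_sqrt_real_inner, EuclideanSpace.inner_eq_cos_sub (hv m) (hv m)]
    simp
  calc 1 < ⟪∑ h, v h, v m⟫ := hinner ▸ hsum
    _ ≤ ‖∑ h, v h‖ := by simpa [hnorm] using real_inner_le_norm (∑ h, v h) (v m)
end

section
/- Let p ≥ 1, let θ₁ ≤ … ≤ θ_{2p+1} be real numbers in [−φ, φ] with φ < π/2, and set v_h = (cos θ_h, sin θ_h) ∈ ℝ². For each j ≤ p set w_j := v_j + v_{2p+2−j}. Then the inner product w_j · v_{p+1} > 0 whenever w_j ≠ 0, and in fact w_j · v_{p+1} = 2 cos((θ_{2p+2−j} − θ_j)/2) cos(θ_{p+1} − (θ_j + θ_{2p+2−j})/2) ≥ 0, with the estimate |∑_{h=1}^{2p+1} v_h| ≥ (∑ v_h) · v_{p+1} = ∑_{j=1}^p w_j · v_{p+1} + 1 > 1. -/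
open Real Finset
open scoped RealInnerProductSpace

/-!
The pairing `j ↔ 2p+2-j` splits `∑ v_h` into `v_{p+1}` plus the vectors `w_j`. By the
sum-to-product formula `w_j ⬝ v_{p+1} = 2 cos((θ_k - θ_j)/2) cos(θ_{p+1} - (θ_j + θ_k)/2)`
with `k = 2p+2-j`, and since `θ_j ≤ θ_{p+1} ≤ θ_k` both arguments have absolute value at most
`(θ_k - θ_j)/2 ≤ φ < π/2`, so every `w_j ⬝ v_{p+1}` is positive. Cauchy–Schwarz against the unit
vector `v_{p+1}` then bounds `‖∑ v_h‖` from below by `1 + ∑_j w_j ⬝ v_{p+1} > 1`.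
-/

namespace EuclideanSpace

lemma inner_eq_cos_sub_of_ofLp_eq {x y : EuclideanSpace ℝ (Fin 2)} {a b : ℝ}
    (hx : x.ofLp = ![cos a, sin a]) (hy : y.ofLp = ![cos b, sin b]) :
    ⟪x, y⟫ = cos (a - b) := by
  simp only [PiLp.inner_apply, RCLike.inner_apply, conj_trivial, Fin.sum_univ_two, hx, hy,
    Matrix.cons_val_zero, Matrix.cons_val_one]
  rw [cos_sub]
  ring

lemma norm_eq_one_of_ofLp_eq {x : EuclideanSpace ℝ (Fin 2)} {a : ℝ}
    (hx : x.ofLp = ![cos a, sin a]) : ‖x‖ = 1 := by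
  have h : ‖x‖ ^ 2 = 1 := by
    rw [← real_inner_self_eq_norm_sq, inner_eq_cos_sub_of_ofLp_eq hx hx, sub_self, cos_zero]
  exact (pow_eq_one_iff_of_nonneg (norm_nonneg x) two_ne_zero).mp h

end EuclideanSpace

namespace Real

lemma cos_sub_add_cos_sub (a b c : ℝ) :
    cos (a - c) + cos (b - c) = 2 * cos ((b - a) / 2) * cos (c - (a + b) / 2) := by
  rw [cos_add_cos, ← cos_neg ((a - c - (b - c)) / 2), ← cos_neg ((a - c + (b - c)) / 2)]
  ring_nf

/-- The key observation: `|c - (a + b)/2| ≤ (b - a)/2 < π/2`. -/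
lemma two_mul_cos_half_sub_mul_cos_sub_midpoint_pos {a b c : ℝ} (hac : a ≤ c) (hcb : c ≤ b)
    (hab : b - a < π) : 0 < 2 * cos ((b - a) / 2) * cos (c - (a + b) / 2) := by
  have h₁ : 0 < cos ((b - a) / 2) := cos_pos_of_mem_Ioo ⟨by linarith, by linarith⟩
  have h₂ : 0 < cos (c - (a + b) / 2) := cos_pos_of_mem_Ioo ⟨by linarith, by linarith⟩
  positivity

end Real

lemma Finset.sum_Icc_eq_sum_symm_pairs_add_middle {M : Type*} [AddCommMonoid M] (f : ℕ → M)
    (p : ℕ) :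
    ∑ h ∈ Icc 1 (2 * p + 1), f h = ∑ j ∈ Icc 1 p, (f j + f (2 * p + 2 - j)) + f (p + 1) := by
  have hsplit : Icc 1 (2 * p + 1) = Icc 1 p ∪ insert (p + 1) (Icc (p + 2) (2 * p + 1)) := by
    ext x; simp only [mem_union, mem_insert, mem_Icc]; omega
  have hdisj : Disjoint (Icc 1 p) (insert (p + 1) (Icc (p + 2) (2 * p + 1))) := by
    simp only [disjoint_left, mem_insert, mem_Icc]; omega
  have hreflect : ∑ j ∈ Icc 1 p, f (2 * p + 2 - j) = ∑ h ∈ Icc (p + 2) (2 * p + 1), f h := by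
    refine sum_nbij' (fun j => 2 * p + 2 - j) (fun h => 2 * p + 2 - h) ?_ ?_ ?_ ?_ fun _ _ => rfl
      <;> intro a ha <;> simp only [mem_Icc] at ha ⊢ <;> omega
  rw [hsplit, sum_union hdisj, sum_insert (by simp), ← hreflect, sum_add_distrib]
  abel

/-- Key wedge estimate: for ordered angles `θ₁ ≤ … ≤ θ_{2p+1}` in `[-φ, φ]`, `φ < π/2`,
and `v_h = (cos θ_h, sin θ_h)`, setting `w_j = v_j + v_{2p+2-j}` one has
`w_j ⬝ v_{p+1} = 2 cos((θ_{2p+2-j} - θ_j)/2) cos(θ_{p+1} - (θ_j + θ_{2p+2-j})/2) ≥ 0`,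
strictly positive when `w_j ≠ 0`, and
`‖∑ v_h‖ ≥ (∑ v_h) ⬝ v_{p+1} = ∑_j w_j ⬝ v_{p+1} + 1 > 1`. -/
theorem stmt_2 (p : ℕ) (hp : 1 ≤ p) (θ : ℕ → ℝ) (φ : ℝ) (hφ : φ < π / 2)
    (hmono : ∀ h h', 1 ≤ h → h ≤ h' → h' ≤ 2 * p + 1 → θ h ≤ θ h')
    (hbd : ∀ h ∈ Icc 1 (2 * p + 1), |θ h| ≤ φ)
    (v : ℕ → EuclideanSpace ℝ (Fin 2))
    (hv : ∀ h, v h = ![Real.cos (θ h), Real.sin (θ h)])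
    (w : ℕ → EuclideanSpace ℝ (Fin 2))
    (hw : ∀ j, w j = v j + v (2 * p + 2 - j)) :
    (∀ j, 1 ≤ j → j ≤ p →
      ⟪w j, v (p + 1)⟫ =
        2 * Real.cos ((θ (2 * p + 2 - j) - θ j) / 2) *
          Real.cos (θ (p + 1) - (θ j + θ (2 * p + 2 - j)) / 2) ∧
      0 ≤ ⟪w j, v (p + 1)⟫ ∧ (w j ≠ 0 → 0 < ⟪w j, v (p + 1)⟫)) ∧
    ⟪∑ h ∈ Icc 1 (2 * p + 1), v h, v (p + 1)⟫ =
      (∑ j ∈ Icc 1 p, ⟪w j, v (p + 1)⟫) + 1 ∧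
    ⟪∑ h ∈ Icc 1 (2 * p + 1), v h, v (p + 1)⟫ ≤ ‖∑ h ∈ Icc 1 (2 * p + 1), v h‖ ∧
    1 < ‖∑ h ∈ Icc 1 (2 * p + 1), v h‖ := by
  have hinner (a b : ℕ) : ⟪v a, v b⟫ = cos (θ a - θ b) :=
    EuclideanSpace.inner_eq_cos_sub_of_ofLp_eq (hv a) (hv b)
  have hpair (j : ℕ) : ⟪w j, v (p + 1)⟫ = 2 * cos ((θ (2 * p + 2 - j) - θ j) / 2) *
      cos (θ (p + 1) - (θ j + θ (2 * p + 2 - j)) / 2) := by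
    rw [hw, inner_add_left, hinner, hinner, cos_sub_add_cos_sub]
  have hpos (j : ℕ) (hj₁ : 1 ≤ j) (hjp : j ≤ p) : 0 < ⟪w j, v (p + 1)⟫ := by
    have hθj := abs_le.mp (hbd j (mem_Icc.mpr (by omega)))
    have hθk := abs_le.mp (hbd (2 * p + 2 - j) (mem_Icc.mpr (by omega)))
    rw [hpair]
    exact two_mul_cos_half_sub_mul_cos_sub_midpoint_pos (hmono _ _ hj₁ (by omega) (by omega))
      (hmono _ _ (by omega) (by omega) (by omega)) (by linarith)
  have hunit : ‖v (p + 1)‖ = 1 := EuclideanSpace.norm_eq_one_of_ofLp_eq (hv (p + 1))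
  have hsum : ⟪∑ h ∈ Icc 1 (2 * p + 1), v h, v (p + 1)⟫ =
      (∑ j ∈ Icc 1 p, ⟪w j, v (p + 1)⟫) + 1 := by
    rw [sum_Icc_eq_sum_symm_pairs_add_middle, inner_add_left, sum_inner,
      real_inner_self_eq_norm_sq, hunit, one_pow]
    simp only [hw]
  have hCS : ⟪∑ h ∈ Icc 1 (2 * p + 1), v h, v (p + 1)⟫ ≤ ‖∑ h ∈ Icc 1 (2 * p + 1), v h‖ := by
    simpa [hunit] using real_inner_le_norm (∑ h ∈ Icc 1 (2 * p + 1), v h) (v (p + 1))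
  have hpos_sum : 0 < ∑ j ∈ Icc 1 p, ⟪w j, v (p + 1)⟫ :=
    sum_pos (fun j hj => hpos j (mem_Icc.mp hj).1 (mem_Icc.mp hj).2) ⟨1, mem_Icc.mpr ⟨le_rfl, hp⟩⟩
  refine ⟨fun j hj₁ hjp => ⟨hpair j, (hpos j hj₁ hjp).le, fun _ => hpos j hj₁ hjp⟩, hsum, hCS, ?_⟩
  linarith
end

section
/- Let N ⊂ ℝⁿ be a bounded open set with smooth boundary, let ε ∈ (0, 1/√3), and let u : N → ℝ be Lipschitz with u = 0 on ∂N and Lip(u) ≤ ε. Define the area excess A(u) := ∫_N (√(1 + |∇u|²) − 1) dx and the deficit δ(u) := sup { ∫_N (∇u/√(1+|∇u|²)) · ∇φ dx : φ ∈ H¹₀(N), ∫_N |∇φ|² ≤ 1 }. Then (1/3 − ε²)² ∫_N |∇u|² ≤ δ(u)², and (1/3 − ε²) A(u) ≤ δ(u)². -/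
open Real MeasureTheory
open scoped RealInnerProductSpace NNReal ENNReal

/-!
Testing the deficit against `φ = u / ‖∇u‖_{L²(N)}` gives
`δ ≥ ‖∇u‖_{L²}⁻¹ ∫_N |∇u|² / √(1 + |∇u|²) ≥ ‖∇u‖_{L²} / √(1 + ε²)`, that is
`∫_N |∇u|² ≤ (1 + ε²) δ²`, while `√(1 + t²) - 1 ≤ t² / 2` gives `A ≤ ½ ∫_N |∇u|²`.
With `ε² < 1/3` both estimates follow.
-/

section Gradient

variable {E : Type*} [NormedAddCommGroup E] [InnerProductSpace ℝ E] [CompleteSpace E]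

theorem norm_gradient (f : E → ℝ) (x : E) : ‖gradient f x‖ = ‖fderiv ℝ f x‖ := by
  simp [gradient]

theorem gradient_const_mul (c : ℝ) (f : E → ℝ) (x : E) :
    gradient (fun y => c * f y) x = c • gradient f x := by
  have h : (fun y => c * f y) = c • f := rfl
  simp [gradient, h, fderiv_const_smul_field]

theorem lipschitzWith_of_norm_gradient_le {f : E → ℝ} {C : ℝ≥0} (hf : Differentiable ℝ f)
    (h : ∀ x, ‖gradient f x‖ ≤ C) : LipschitzWith C f :=
  lipschitzWith_of_nnnorm_fderiv_le hf fun x => by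
    rw [← NNReal.coe_le_coe, coe_nnnorm, ← norm_gradient]; exact h x

theorem norm_gradient_le_of_lipschitzWith {f : E → ℝ} {K : ℝ≥0} (hf : LipschitzWith K f)
    (x : E) : ‖gradient f x‖ ≤ K := by
  rw [norm_gradient]; exact norm_fderiv_le_of_lipschitz ℝ hf

@[fun_prop]
theorem measurable_gradient [MeasurableSpace E] [BorelSpace E] (f : E → ℝ) :
    Measurable (gradient f) :=
  (InnerProductSpace.toDual ℝ E).symm.continuous.measurable.comp (measurable_fderiv ℝ f)

end Gradient

theorem one_le_sqrt_one_add_sq (t : ℝ) : 1 ≤ √(1 + t ^ 2) :=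
  Real.one_le_sqrt.2 (by nlinarith [sq_nonneg t])

theorem sqrt_one_add_sq_sub_one_le (t : ℝ) : √(1 + t ^ 2) - 1 ≤ t ^ 2 / 2 := by
  linarith [Real.sqrt_one_add_le (by nlinarith [sq_nonneg t] : (-1 : ℝ) ≤ t ^ 2)]

section AreaField

variable {E : Type*} [NormedAddCommGroup E] [InnerProductSpace ℝ E] [CompleteSpace E]

/-- The gradient of the area integrand `p ↦ √(1 + ‖p‖²)` at `p = ∇u x`. -/
noncomputable def areaField (u : E → ℝ) (x : E) : E :=
  (√(1 + ‖gradient u x‖ ^ 2))⁻¹ • gradient u x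

theorem norm_areaField_le_one (u : E → ℝ) (x : E) : ‖areaField u x‖ ≤ 1 := by
  have hpos : 0 < √(1 + ‖gradient u x‖ ^ 2) :=
    one_pos.trans_le (one_le_sqrt_one_add_sq _)
  have hle : ‖gradient u x‖ ≤ √(1 + ‖gradient u x‖ ^ 2) :=
    Real.le_sqrt_of_sq_le (by linarith)
  rw [areaField, norm_smul, norm_inv, Real.norm_of_nonneg hpos.le, inv_mul_le_iff₀ hpos]
  linarith

theorem inner_areaField_gradient (u : E → ℝ) (x : E) :
    ⟪areaField u x, gradient u x⟫ = ‖gradient u x‖ ^ 2 / √(1 + ‖gradient u x‖ ^ 2) := by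
  rw [areaField, real_inner_smul_left, real_inner_self_eq_norm_sq, inv_mul_eq_div]

variable [MeasurableSpace E] [BorelSpace E]

theorem measurable_sqrt_one_add_norm_gradient_sq (u : E → ℝ) :
    Measurable fun x => √(1 + ‖gradient u x‖ ^ 2) :=
  (((measurable_gradient u).norm.pow_const 2).const_add 1).sqrt

@[fun_prop]
theorem measurable_areaField (u : E → ℝ) : Measurable (areaField u) :=
  (measurable_sqrt_one_add_norm_gradient_sq u).inv.smul (measurable_gradient u)

end AreaField

section Deficit

variable {E : Type*} [NormedAddCommGroup E] [InnerProductSpace ℝ E] [CompleteSpace E]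
  [MeasurableSpace E] {μ : Measure E} {N : Set E}

/-- The set whose supremum is the deficit `δ(u)`; Lipschitz differentiable functions vanishing
off `N` stand in for `H¹₀(N)`. -/
def deficitSet (μ : Measure E) (N : Set E) (u : E → ℝ) : Set ℝ :=
  {r | ∃ φ : E → ℝ, Differentiable ℝ φ ∧ (∀ x ∉ N, φ x = 0) ∧ (∃ K : ℝ≥0, LipschitzWith K φ) ∧
    (∫ x in N, ‖gradient φ x‖ ^ 2 ∂μ) ≤ 1 ∧ r = ∫ x in N, ⟪areaField u x, gradient φ x⟫ ∂μ}

theorem mul_integral_sq_div_sqrt_mem_deficitSet {u : E → ℝ} {K : ℝ≥0} (hu : Differentiable ℝ u)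
    (hu0 : ∀ x ∉ N, u x = 0) (huK : LipschitzWith K u) {c : ℝ}
    (hc : c ^ 2 * ∫ x in N, ‖gradient u x‖ ^ 2 ∂μ ≤ 1) :
    c * ∫ x in N, ‖gradient u x‖ ^ 2 / √(1 + ‖gradient u x‖ ^ 2) ∂μ ∈ deficitSet μ N u := by
  refine ⟨fun x => c * u x, hu.const_mul c, fun x hx => by simp [hu0 x hx],
    ⟨_, (lipschitzWith_smul c).comp huK⟩, ?_, ?_⟩
  · simpa only [gradient_const_mul, norm_smul, mul_pow, Real.norm_eq_abs, sq_abs,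
      integral_const_mul] using hc
  · simp only [gradient_const_mul, real_inner_smul_right, inner_areaField_gradient,
      integral_const_mul]

variable [BorelSpace E]

theorem integrableOn_norm_gradient_sq (hN : μ N ≠ ∞) {f : E → ℝ} {C : ℝ}
    (hf : ∀ x, ‖gradient f x‖ ≤ C) : IntegrableOn (fun x => ‖gradient f x‖ ^ 2) N μ := by
  refine Measure.integrableOn_of_bounded (M := C ^ 2) hN
    ((measurable_gradient f).norm.pow_const 2).aestronglyMeasurable (ae_of_all _ fun x => ?_)
  rw [norm_pow, norm_norm]
  exact pow_le_pow_left₀ (norm_nonneg _) (hf x) 2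

theorem integral_sq_div_sqrt_ge {u : E → ℝ} {ε : ℝ} (hu : ∀ x, ‖gradient u x‖ ≤ ε)
    (hE : IntegrableOn (fun x => ‖gradient u x‖ ^ 2) N μ) :
    (∫ x in N, ‖gradient u x‖ ^ 2 ∂μ) / √(1 + ε ^ 2) ≤
      ∫ x in N, ‖gradient u x‖ ^ 2 / √(1 + ‖gradient u x‖ ^ 2) ∂μ := by
  have hdom : IntegrableOn (fun x => ‖gradient u x‖ ^ 2 / √(1 + ‖gradient u x‖ ^ 2)) N μ := by
    refine hE.mono' (((measurable_gradient u).norm.pow_const 2).div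
      (measurable_sqrt_one_add_norm_gradient_sq u)).aestronglyMeasurable
      (ae_of_all _ fun x => ?_)
    rw [Real.norm_of_nonneg (by positivity)]
    exact div_le_self (by positivity) (one_le_sqrt_one_add_sq _)
  rw [← integral_div]
  refine setIntegral_mono (hE.div_const _) hdom fun x => ?_
  have := hu x
  have := norm_nonneg (gradient u x)
  gcongr

theorem integral_sqrt_one_add_sq_sub_one_le {u : E → ℝ}
    (hE : IntegrableOn (fun x => ‖gradient u x‖ ^ 2) N μ) :
    ∫ x in N, (√(1 + ‖gradient u x‖ ^ 2) - 1) ∂μ ≤ (∫ x in N, ‖gradient u x‖ ^ 2 ∂μ) / 2 := by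
  have hdom : IntegrableOn (fun x => √(1 + ‖gradient u x‖ ^ 2) - 1) N μ := by
    refine (hE.div_const 2).mono'
      ((measurable_sqrt_one_add_norm_gradient_sq u).sub_const 1).aestronglyMeasurable
      (ae_of_all _ fun x => ?_)
    rw [Real.norm_of_nonneg (sub_nonneg.2 (one_le_sqrt_one_add_sq _))]
    exact sqrt_one_add_sq_sub_one_le _
  rw [← integral_div]
  exact setIntegral_mono hdom (hE.div_const _) fun x => sqrt_one_add_sq_sub_one_le _

variable [SecondCountableTopology E]

theorem bddAbove_deficitSet (hN : μ N ≠ ∞) (u : E → ℝ) : BddAbove (deficitSet μ N u) := by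
  refine ⟨(μ.real N + 1) / 2, ?_⟩
  rintro r ⟨φ, -, -, ⟨K, hφK⟩, hφ1, rfl⟩
  have hφ := integrableOn_norm_gradient_sq hN (norm_gradient_le_of_lipschitzWith hφK)
  have hinner : IntegrableOn (fun x => ⟪areaField u x, gradient φ x⟫) N μ := by
    refine Measure.integrableOn_of_bounded (M := K) hN (by fun_prop) (ae_of_all _ fun x => ?_)
    calc ‖⟪areaField u x, gradient φ x⟫‖ ≤ ‖areaField u x‖ * ‖gradient φ x‖ :=
          norm_inner_le_norm _ _
      _ ≤ 1 * K := mul_le_mul (norm_areaField_le_one u x)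
          (norm_gradient_le_of_lipschitzWith hφK x) (norm_nonneg _) zero_le_one
      _ = K := one_mul _
  have hone : IntegrableOn (fun _ => (1 : ℝ)) N μ := integrableOn_const hN
  calc ∫ x in N, ⟪areaField u x, gradient φ x⟫ ∂μ
      ≤ ∫ x in N, (1 + ‖gradient φ x‖ ^ 2) / 2 ∂μ := by
        refine setIntegral_mono hinner ((hone.add hφ).div_const 2) fun x => ?_
        have := real_inner_le_norm (areaField u x) (gradient φ x)
        have := norm_areaField_le_one u x
        nlinarith [norm_nonneg (gradient φ x), sq_nonneg (‖gradient φ x‖ - 1)]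
    _ = (μ.real N + ∫ x in N, ‖gradient φ x‖ ^ 2 ∂μ) / 2 := by
        rw [integral_div, integral_add hone hφ, setIntegral_const, smul_eq_mul, mul_one]
    _ ≤ (μ.real N + 1) / 2 := by linarith

theorem integral_norm_gradient_sq_le_mul_sSup_deficitSet_sq (hN : μ N ≠ ∞) {u : E → ℝ}
    {ε : ℝ} (hu : Differentiable ℝ u) (hu0 : ∀ x ∉ N, u x = 0)
    (hε : ∀ x, ‖gradient u x‖ ≤ ε) :
    ∫ x in N, ‖gradient u x‖ ^ 2 ∂μ ≤ (1 + ε ^ 2) * sSup (deficitSet μ N u) ^ 2 := by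
  set e := ∫ x in N, ‖gradient u x‖ ^ 2 ∂μ
  set δ := sSup (deficitSet μ N u)
  have he0 : 0 ≤ e := integral_nonneg fun x => by positivity
  rcases he0.eq_or_lt with he | he
  · rw [← he]; positivity
  have hc : (√e)⁻¹ ^ 2 * e ≤ 1 := by rw [inv_pow, sq_sqrt he0, inv_mul_cancel₀ he.ne']
  have hmem := mul_integral_sq_div_sqrt_mem_deficitSet hu hu0
    (lipschitzWith_of_norm_gradient_le hu fun x => (hε x).trans (Real.le_coe_toNNReal ε)) hc
  have hlow : √(e / (1 + ε ^ 2)) ≤ δ := calc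
    √(e / (1 + ε ^ 2)) = (√e)⁻¹ * (e / √(1 + ε ^ 2)) := by
      rw [sqrt_div he0]; field_simp; exact sq_sqrt he0
    _ ≤ (√e)⁻¹ * ∫ x in N, ‖gradient u x‖ ^ 2 / √(1 + ‖gradient u x‖ ^ 2) ∂μ := by
      gcongr; exact integral_sq_div_sqrt_ge hε (integrableOn_norm_gradient_sq hN hε)
    _ ≤ δ := le_csSup (bddAbove_deficitSet hN u) hmem
  calc e = (1 + ε ^ 2) * √(e / (1 + ε ^ 2)) ^ 2 := by
        rw [sq_sqrt (by positivity)]; field_simp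
    _ ≤ (1 + ε ^ 2) * δ ^ 2 := by gcongr

end Deficit

theorem stmt_9_general (n : ℕ) (N : Set (EuclideanSpace ℝ (Fin n)))
    (hNbdd : Bornology.IsBounded N)
    (ε : ℝ) (hε : ε ∈ Set.Ioo 0 (1 / Real.sqrt 3))
    (u : EuclideanSpace ℝ (Fin n) → ℝ)
    (hu : Differentiable ℝ u) (hu0 : ∀ x ∉ N, u x = 0)
    (hLip : ∀ x, ‖gradient u x‖ ≤ ε)
    (A δ : ℝ)
    (hA : A = ∫ x in N, (Real.sqrt (1 + ‖gradient u x‖ ^ 2) - 1))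
    (hδ : δ = sSup { r : ℝ | ∃ φ : EuclideanSpace ℝ (Fin n) → ℝ,
      Differentiable ℝ φ ∧ (∀ x ∉ N, φ x = 0) ∧ (∃ K : NNReal, LipschitzWith K φ) ∧
      (∫ x in N, ‖gradient φ x‖ ^ 2) ≤ 1 ∧
      r = ∫ x in N,
        ⟪(Real.sqrt (1 + ‖gradient u x‖ ^ 2))⁻¹ • gradient u x, gradient φ x⟫ }) :
    (1 / 3 - ε ^ 2) ^ 2 * (∫ x in N, ‖gradient u x‖ ^ 2) ≤ δ ^ 2 ∧
      (1 / 3 - ε ^ 2) * A ≤ δ ^ 2 := by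
  have hε2 : ε ^ 2 < 1 / 3 := by
    have h := pow_lt_pow_left₀ hε.2 hε.1.le two_ne_zero
    rwa [div_pow, one_pow, sq_sqrt (by norm_num)] at h
  have hN : volume N ≠ ∞ := hNbdd.measure_lt_top.ne
  have hδ' : δ = sSup (deficitSet volume N u) := hδ
  have hE0 : 0 ≤ ∫ x in N, ‖gradient u x‖ ^ 2 := integral_nonneg fun x => by positivity
  have hEδ := integral_norm_gradient_sq_le_mul_sSup_deficitSet_sq hN hu hu0 hLip
  have hAE : A ≤ (∫ x in N, ‖gradient u x‖ ^ 2) / 2 :=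
    hA ▸ integral_sqrt_one_add_sq_sub_one_le (integrableOn_norm_gradient_sq hN hLip)
  rw [← hδ'] at hEδ
  have hgap : 0 ≤ 1 / 3 - ε ^ 2 := by linarith
  constructor
  · nlinarith [mul_nonneg hE0 (mul_nonneg (sq_nonneg ε) (by linarith : (0 : ℝ) ≤ 2 / 3 - ε ^ 2)),
      mul_nonneg (sq_nonneg δ) hgap]
  · nlinarith [mul_le_mul_of_nonneg_left hAE hgap, mul_nonneg hE0 (sq_nonneg ε),
      mul_nonneg (sq_nonneg δ) hgap]

/-- Flat-case sharp stability estimate: for a Lipschitz function `u` on a bounded open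
set `N ⊂ ℝⁿ` vanishing outside `N`, with `Lip(u) ≤ ε < 1/√3`, the area excess
`A(u) = ∫_N (√(1+|∇u|²) - 1)` and the Dirichlet energy `∫_N |∇u|²` are controlled by
the square of the duality deficit
`δ(u) = sup { ∫_N ∇u/√(1+|∇u|²) ⬝ ∇φ : φ ∈ H¹₀(N), ∫_N |∇φ|² ≤ 1 }`:
namely `(1/3 - ε²)² ∫_N |∇u|² ≤ δ(u)²` and `(1/3 - ε²) A(u) ≤ δ(u)²`. -/
theorem stmt_9 (n : ℕ) (N : Set (EuclideanSpace ℝ (Fin n)))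
    (hNopen : IsOpen N) (hNbdd : Bornology.IsBounded N)
    (ε : ℝ) (hε : ε ∈ Set.Ioo 0 (1 / Real.sqrt 3))
    (u : EuclideanSpace ℝ (Fin n) → ℝ)
    (hu : Differentiable ℝ u) (hu0 : ∀ x ∉ N, u x = 0)
    (hLip : ∀ x, ‖gradient u x‖ ≤ ε)
    (A δ : ℝ)
    (hA : A = ∫ x in N, (Real.sqrt (1 + ‖gradient u x‖ ^ 2) - 1))
    (hδ : δ = sSup { r : ℝ | ∃ φ : EuclideanSpace ℝ (Fin n) → ℝ,
      Differentiable ℝ φ ∧ (∀ x ∉ N, φ x = 0) ∧ (∃ K : NNReal, LipschitzWith K φ) ∧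
      (∫ x in N, ‖gradient φ x‖ ^ 2) ≤ 1 ∧
      r = ∫ x in N,
        ⟪(Real.sqrt (1 + ‖gradient u x‖ ^ 2))⁻¹ • gradient u x, gradient φ x⟫ }) :
    (1 / 3 - ε ^ 2) ^ 2 * (∫ x in N, ‖gradient u x‖ ^ 2) ≤ δ ^ 2 ∧
      (1 / 3 - ε ^ 2) * A ≤ δ ^ 2 :=
  stmt_9_general n N hNbdd ε hε u hu hu0 hLip A δ hA hδ
end
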